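/- Let A, B ⊂ ℝⁿ be compact uniformly convex sets with moduli of convexity δ_A and δ_B, and suppose the closed ball B_{r₀}(a) ⊆ A ∩ B for some r₀ > 0 and a ∈ ℝⁿ. Let 𝒞 be a grid with step Δ ∈ (0,1/2), let Â and B̂ be the external polyhedral approximations of A and B on 𝒞, and suppose max{diam Â, diam B̂} ≤ d. Suppose ε^A_Δ ∈ (0, diam A) satisfies δ_A(ε^A_Δ)/ε^A_Δ = Δ/(4 − Δ²) and ε^B_Δ ∈ (0, diam B) satisfies δ_B(ε^B_Δ)/ε^B_Δ = Δ/(4 − Δ²). Then h(A ∩ B, Â ∩ B̂) ≤ (8/7)·(max{ε^A_Δ, ε^B_Δ} + (d/r₀)·(ε^A_Δ + ε^B_Δ))·Δ. -/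

import Mathlib

/-!
The core estimate is `h(A, Â) ≤ (8/7) Δ ε`. For `x ∈ Â` with nearest point `y ∈ A`, the unit
normal `p = (x - y) / ‖x - y‖` is a positive combination `∑ αᵢ qᵢ` of grid directions that are
`Δ`-close to `p`, with `∑ αᵢ ≤ 8/7`. Points of `A` extremal in two unit directions at distance
`≤ Δ` are at most `ε` apart: otherwise, after a homothety centred at an extremal point, the
midpoint balls of radius `δ(ε)` would force `δ(ε) ≤ Δ ε / 4 < Δ ε / (4 - Δ²)`. Hence
`⟪qᵢ, x - y⟫ ≤ Δ ε` and `‖x - y‖ = ∑ αᵢ ⟪qᵢ, x - y⟫ ≤ (8/7) Δ ε`.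

For `y ∈ Â ∩ B̂`, both `A` and `B` are within `ρ = (8/7) Δ (ε_A + ε_B)` of `y`; moving `y`
towards `a` by the fraction `ρ / (r₀ + ρ)` lands in `A ∩ B` by convexity, since `B_{r₀}(a)` lies
in both, and moves `y` by at most `(ρ / r₀) ‖y - a‖ ≤ (ρ / r₀) d`.
-/

open Set Metric Pointwise

/-- Supporting function `s(p, A) = sup_{x ∈ A} ⟪p, x⟫`. -/
noncomputable def suppF {n : ℕ} (p : EuclideanSpace ℝ (Fin n))
    (A : Set (EuclideanSpace ℝ (Fin n))) : ℝ :=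
  sSup ((fun x => (inner ℝ p x : ℝ)) '' A)

/-- Modulus of convexity of a set `A`. -/
noncomputable def modConv {n : ℕ} (A : Set (EuclideanSpace ℝ (Fin n))) (ε : ℝ) : ℝ :=
  sSup {δ : ℝ | 0 ≤ δ ∧ ∀ x₁ ∈ A, ∀ x₂ ∈ A, ‖x₁ - x₂‖ = ε →
    Metric.closedBall (midpoint ℝ x₁ x₂) δ ⊆ A}

/-- `A` is uniformly convex: its modulus of convexity is positive on `(0, diam A)`. -/
def UnifConvex {n : ℕ} (A : Set (EuclideanSpace ℝ (Fin n))) : Prop :=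
  ∀ ε : ℝ, 0 < ε → ε < Metric.diam A → 0 < modConv A ε

/-- `C` is a grid with step `Δ`: a finite set of unit vectors such that every nonzero `p`
whose normalization is not in `C` is a positive combination of grid vectors that are
pairwise `Δ`-close. -/
def IsGrid {n : ℕ} (C : Finset (EuclideanSpace ℝ (Fin n))) (Δ : ℝ) : Prop :=
  (∀ p ∈ C, ‖p‖ = 1) ∧
  ∀ p : EuclideanSpace ℝ (Fin n), p ≠ 0 → ‖p‖⁻¹ • p ∉ C →
    ∃ (k : ℕ) (q : Fin k → EuclideanSpace ℝ (Fin n)) (α : Fin k → ℝ),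
      (∀ i, q i ∈ C) ∧ (∀ i, 0 < α i) ∧ p = ∑ i, α i • q i ∧
      ∀ i j, ‖q i - q j‖ < Δ

/-- External polyhedral approximation of `A` on the grid `C`. -/
def polyApprox {n : ℕ} (C : Finset (EuclideanSpace ℝ (Fin n)))
    (A : Set (EuclideanSpace ℝ (Fin n))) : Set (EuclideanSpace ℝ (Fin n)) :=
  {x | ∀ p ∈ C, (inner ℝ p x : ℝ) ≤ suppF p A}

/-- Geometric (Minkowski–Pontryagin) difference `B ⊖ A = {x | x + A ⊆ B}`. -/
def geomDiff {n : ℕ} (B A : Set (EuclideanSpace ℝ (Fin n))) :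
    Set (EuclideanSpace ℝ (Fin n)) :=
  {x | ∀ a ∈ A, x + a ∈ B}

open scoped RealInnerProductSpace

section InnerProductSpace

variable {E : Type*} [NormedAddCommGroup E] [InnerProductSpace ℝ E]

/-- `modConv A ε` is the supremum of the `δ ≥ 0` with `HasMidpointBalls A ε δ`. -/
def HasMidpointBalls (A : Set E) (ε δ : ℝ) : Prop :=
  ∀ x₁ ∈ A, ∀ x₂ ∈ A, ‖x₁ - x₂‖ = ε → closedBall (midpoint ℝ x₁ x₂) δ ⊆ A

/-- `y` is the nearest point of `A` to `x`. -/
lemma exists_isMaxOn_inner_sub {A : Set E} (hA : IsComplete A) (hAc : Convex ℝ A)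
    (hne : A.Nonempty) (x : E) : ∃ y ∈ A, IsMaxOn (⟪x - y, ·⟫) A y := by
  obtain ⟨y, hy, hmin⟩ := exists_norm_eq_iInf_of_complete_convex hne hA hAc x
  refine ⟨y, hy, fun w hw => ?_⟩
  have := (norm_eq_iInf_iff_real_inner_le_zero hAc hy).1 hmin w hw
  rw [inner_sub_right] at this
  exact sub_nonpos.1 this

lemma inner_le_add_mul_norm_of_mem_closedBall {m z : E} {r : ℝ} (hz : z ∈ closedBall m r)
    (p : E) : ⟪p, z⟫ ≤ ⟪p, m⟫ + r * ‖p‖ := by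
  have hzm : ⟪p, z - m⟫ ≤ r * ‖p‖ :=
    (real_inner_le_norm p _).trans (by rw [mul_comm, ← dist_eq_norm]; gcongr; exact hz)
  rw [inner_sub_right] at hzm
  linarith

lemma closedBall_subset_of_forall_inner {A : Set E} (hA : IsComplete A) (hAc : Convex ℝ A)
    {m : E} {r : ℝ} (h : ∀ p : E, ∃ x ∈ A, ⟪p, m⟫ + r * ‖p‖ ≤ ⟪p, x⟫) :
    closedBall m r ⊆ A := by
  intro z hz
  by_contra hzA
  obtain ⟨w, hw, hwmax⟩ := exists_isMaxOn_inner_sub hA hAc (let ⟨x, hx, _⟩ := h 0; ⟨x, hx⟩) z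
  obtain ⟨x, hx, hxm⟩ := h (z - w)
  have hpos : 0 < ‖z - w‖ := norm_pos_iff.2 (sub_ne_zero.2 fun hzw => hzA (hzw ▸ hw))
  have hzw : ⟪z - w, z⟫ = ⟪z - w, w⟫ + ‖z - w‖ ^ 2 := by
    rw [← real_inner_self_eq_norm_sq, ← inner_add_right, add_sub_cancel]
  have hxw : ⟪z - w, x⟫ ≤ ⟪z - w, w⟫ := hwmax hx
  have := inner_le_add_mul_norm_of_mem_closedBall hz (z - w)
  nlinarith

lemma inner_add_mul_norm_le_of_closedBall_subset {A : Set E} {m y p : E} {r : ℝ} (hr : 0 ≤ r)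
    (hball : closedBall m r ⊆ A) (hmax : IsMaxOn (⟪p, ·⟫) A y) : ⟪p, m⟫ + r * ‖p‖ ≤ ⟪p, y⟫ := by
  rcases eq_or_ne p 0 with rfl | hp
  · simp
  have hp' : 0 < ‖p‖ := norm_pos_iff.2 hp
  have hmem : m + (r / ‖p‖) • p ∈ closedBall m r := by
    rw [mem_closedBall, dist_eq_norm, add_sub_cancel_left, norm_smul, Real.norm_eq_abs,
      abs_of_nonneg (by positivity), div_mul_cancel₀ _ hp'.ne']
  have : ⟪p, m + (r / ‖p‖) • p⟫ ≤ ⟪p, y⟫ := hmax (hball hmem)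
  rw [inner_add_right, real_inner_smul_right, real_inner_self_eq_norm_sq] at this
  convert this using 2
  field_simp

/-- Apply `hadm` to the image of the chord under the homothety of ratio `ε / ‖x₁ - x₂‖` centred
at a point of `A` extremal in the direction being tested. -/
lemma closedBall_midpoint_subset_of_le_norm_sub {A : Set E} (hA : IsCompact A)
    (hAc : Convex ℝ A) {ε δ : ℝ} (hε : 0 < ε) (hδ : 0 ≤ δ) (hadm : HasMidpointBalls A ε δ)
    {x₁ x₂ : E} (h₁ : x₁ ∈ A) (h₂ : x₂ ∈ A) (hle : ε ≤ ‖x₁ - x₂‖) :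
    closedBall (midpoint ℝ x₁ x₂) (‖x₁ - x₂‖ / ε * δ) ⊆ A := by
  refine closedBall_subset_of_forall_inner hA.isComplete hAc fun p => ?_
  obtain ⟨xs, hxs, hmax⟩ := hA.exists_isMaxOn ⟨x₁, h₁⟩
    (f := (⟪p, ·⟫)) (continuous_const.inner continuous_id).continuousOn
  refine ⟨xs, hxs, ?_⟩
  set ε' := ‖x₁ - x₂‖
  have hε' : 0 < ε' := hε.trans_le hle
  set t := ε / ε'
  have ht : 0 < t := div_pos hε hε'
  have ht1 : t ≤ 1 := (div_le_one hε').2 hle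
  have hy₁ : (1 - t) • xs + t • x₁ ∈ A := hAc hxs h₁ (by linarith) ht.le (by ring)
  have hy₂ : (1 - t) • xs + t • x₂ ∈ A := hAc hxs h₂ (by linarith) ht.le (by ring)
  have hdist : ‖((1 - t) • xs + t • x₁) - ((1 - t) • xs + t • x₂)‖ = ε := by
    rw [add_sub_add_left_eq_sub, ← smul_sub, norm_smul, Real.norm_of_nonneg ht.le]
    exact div_mul_cancel₀ _ hε'.ne'
  have hmid : midpoint ℝ ((1 - t) • xs + t • x₁) ((1 - t) • xs + t • x₂) =
      (1 - t) • xs + t • midpoint ℝ x₁ x₂ := by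
    simp only [midpoint_eq_smul_add, invOf_eq_inv]
    module
  have key := inner_add_mul_norm_le_of_closedBall_subset hδ (hadm _ hy₁ _ hy₂ hdist) hmax
  rw [hmid, inner_add_right, real_inner_smul_right, real_inner_smul_right] at key
  have hscale : t * (ε' / ε * δ) = δ := by simp only [t]; field_simp
  nlinarith [norm_nonneg p]

lemma real_inner_midpoint (p x y : E) : ⟪p, midpoint ℝ x y⟫ = (⟪p, x⟫ + ⟪p, y⟫) / 2 := by
  rw [midpoint_eq_smul_add, invOf_eq_inv, real_inner_smul_right, inner_add_right]
  ring

lemma four_mul_le_norm_sub_mul_of_isMaxOn_inner {A : Set E} (hA : IsCompact A)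
    (hAc : Convex ℝ A) {ε δ : ℝ} (hε : 0 < ε) (hδ : 0 ≤ δ) (hadm : HasMidpointBalls A ε δ)
    {p q x y : E} (hp : ‖p‖ = 1) (hq : ‖q‖ = 1) (hy : y ∈ A) (hx : x ∈ A)
    (hymax : IsMaxOn (⟪p, ·⟫) A y) (hxmax : IsMaxOn (⟪q, ·⟫) A x) (hle : ε ≤ ‖y - x‖) :
    4 * δ ≤ ‖q - p‖ * ε := by
  have hball := closedBall_midpoint_subset_of_le_norm_sub hA hAc hε hδ hadm hy hx hle
  have hyx : 0 < ‖y - x‖ := hε.trans_le hle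
  have hc : 0 ≤ ‖y - x‖ / ε * δ := by positivity
  have hpy := inner_add_mul_norm_le_of_closedBall_subset hc hball hymax
  have hqx := inner_add_mul_norm_le_of_closedBall_subset hc hball hxmax
  rw [hp, mul_one, real_inner_midpoint] at hpy
  rw [hq, mul_one, real_inner_midpoint] at hqx
  have hcs : ⟪q - p, x - y⟫ ≤ ‖q - p‖ * ‖y - x‖ :=
    (real_inner_le_norm _ _).trans_eq (by rw [norm_sub_rev x])
  simp only [inner_sub_left, inner_sub_right] at hcs
  have h4 : 4 * (‖y - x‖ / ε * δ) ≤ ‖q - p‖ * ‖y - x‖ := by linarith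
  rw [div_mul_eq_mul_div, mul_div_assoc', div_le_iff₀ hε] at h4
  nlinarith

lemma norm_sub_sq_eq_two_sub_two_inner {u v : E} (hu : ‖u‖ = 1) (hv : ‖v‖ = 1) :
    ‖u - v‖ ^ 2 = 2 - 2 * ⟪u, v⟫ := by
  rw [norm_sub_sq_real, hu, hv]
  ring

section Combination

variable {ι : Type*} [Fintype ι] {q : ι → E} {α : ι → ℝ} {c : ℝ}

lemma mul_sum_le_inner_sum_smul (hα : ∀ i, 0 ≤ α i) (hqq : ∀ i j, c ≤ ⟪q i, q j⟫) (i : ι) :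
    c * ∑ j, α j ≤ ⟪q i, ∑ j, α j • q j⟫ := by
  rw [inner_sum, Finset.mul_sum]
  refine Finset.sum_le_sum fun j _ => ?_
  rw [real_inner_smul_right, mul_comm]
  exact mul_le_mul_of_nonneg_left (hqq i j) (hα j)

lemma mul_sq_sum_le_norm_sum_smul_sq (hα : ∀ i, 0 ≤ α i) (hqq : ∀ i j, c ≤ ⟪q i, q j⟫) :
    c * (∑ i, α i) ^ 2 ≤ ‖∑ i, α i • q i‖ ^ 2 := by
  calc c * (∑ i, α i) ^ 2 = ∑ i, α i * (c * ∑ j, α j) := by rw [← Finset.sum_mul]; ring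
    _ ≤ ∑ i, ⟪α i • q i, ∑ j, α j • q j⟫ := Finset.sum_le_sum fun i _ => by
      rw [real_inner_smul_left]
      exact mul_le_mul_of_nonneg_left (mul_sum_le_inner_sum_smul hα hqq i) (hα i)
    _ = ‖∑ i, α i • q i‖ ^ 2 := by rw [← sum_inner, real_inner_self_eq_norm_sq]

lemma norm_sum_smul_le_sum (hα : ∀ i, 0 ≤ α i) (hq : ∀ i, ‖q i‖ = 1) :
    ‖∑ i, α i • q i‖ ≤ ∑ i, α i :=
  (norm_sum_le _ _).trans_eq <| Finset.sum_congr rfl fun i _ => by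
    rw [norm_smul, hq i, mul_one, Real.norm_of_nonneg (hα i)]

end Combination

end InnerProductSpace

section NormedSpace

variable {E : Type*} [NormedAddCommGroup E] [NormedSpace ℝ E]

lemma Convex.smul_add_smul_mem_of_closedBall_subset {X : Set E} (hX : Convex ℝ X) {a w y : E}
    {r t : ℝ} (hball : closedBall a r ⊆ X) (hw : w ∈ X) (ht₀ : 0 < t) (ht₁ : t ≤ 1)
    (hdist : (1 - t) * dist y w ≤ t * r) : (1 - t) • y + t • a ∈ X := by
  have hc : a + ((1 - t) / t) • (y - w) ∈ X := by
    refine hball ?_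
    rw [mem_closedBall, dist_eq_norm, add_sub_cancel_left, norm_smul,
      Real.norm_of_nonneg (div_nonneg (by linarith) ht₀.le), ← dist_eq_norm, div_mul_eq_mul_div,
      div_le_iff₀ ht₀, mul_comm r]
    exact hdist
  convert hX hw hc (sub_nonneg.2 ht₁) ht₀.le (sub_add_cancel 1 t) using 1
  rw [smul_add, smul_smul, mul_div_cancel₀ _ ht₀.ne']
  module

/-- Pulling `y` towards the centre of a ball contained in two convex sets, each within `ρ` of `y`,
by the fraction `ρ / (r + ρ)` lands in both. -/
lemma Convex.exists_mem_inter_dist_le {X Y : Set E} (hX : Convex ℝ X) (hY : Convex ℝ Y)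
    {a : E} {r : ℝ} (hr : 0 < r) (hball : closedBall a r ⊆ X ∩ Y) {y u v : E} (hu : u ∈ X)
    (hv : v ∈ Y) {ρ : ℝ} (hρ : 0 < ρ) (hyu : dist y u ≤ ρ) (hyv : dist y v ≤ ρ) :
    ∃ z ∈ X ∩ Y, dist y z ≤ ρ / r * dist y a := by
  set t := ρ / (r + ρ)
  have ht₀ : 0 < t := by positivity
  have ht₁ : t ≤ 1 := (div_le_one (by positivity)).2 (by linarith)
  have hρt : (1 - t) * ρ = t * r := by simp only [t]; field_simp; ring
  have hmem : ∀ {Z : Set E} {w : E}, Convex ℝ Z → closedBall a r ⊆ Z → w ∈ Z →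
      dist y w ≤ ρ → (1 - t) • y + t • a ∈ Z := fun hZ hZball hw hyw =>
    hZ.smul_add_smul_mem_of_closedBall_subset hZball hw ht₀ ht₁
      (hρt ▸ mul_le_mul_of_nonneg_left hyw (by linarith))
  refine ⟨_, ⟨hmem hX (hball.trans inter_subset_left) hu hyu,
    hmem hY (hball.trans inter_subset_right) hv hyv⟩, ?_⟩
  have hyz : y - ((1 - t) • y + t • a) = t • (y - a) := by module
  rw [dist_eq_norm, hyz, norm_smul, Real.norm_of_nonneg ht₀.le, ← dist_eq_norm]
  gcongr
  exact div_le_div_of_nonneg_left hρ.le hr (by linarith)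

end NormedSpace

section Euclidean

variable {n : ℕ}

lemma inner_le_suppF {A : Set (EuclideanSpace ℝ (Fin n))} (hA : IsCompact A)
    {x : EuclideanSpace ℝ (Fin n)} (hx : x ∈ A) (p : EuclideanSpace ℝ (Fin n)) :
    ⟪p, x⟫ ≤ suppF p A :=
  le_csSup ((hA.image (continuous_const.inner continuous_id)).isBounded.bddAbove) ⟨x, hx, rfl⟩

lemma suppF_eq_of_isMaxOn {A : Set (EuclideanSpace ℝ (Fin n))} {p x : EuclideanSpace ℝ (Fin n)}
    (hx : x ∈ A) (hmax : IsMaxOn (⟪p, ·⟫) A x) : suppF p A = ⟪p, x⟫ :=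
  IsGreatest.csSup_eq ⟨⟨x, hx, rfl⟩, by rintro _ ⟨w, hw, rfl⟩; exact hmax hw⟩

lemma subset_polyApprox {A : Set (EuclideanSpace ℝ (Fin n))} (hA : IsCompact A)
    (C : Finset (EuclideanSpace ℝ (Fin n))) : A ⊆ polyApprox C A :=
  fun _ hx p _ => inner_le_suppF hA hx p

lemma modConv_le {A : Set (EuclideanSpace ℝ (Fin n))} {ε b : ℝ} (hb : 0 ≤ b)
    (h : ∀ δ, 0 ≤ δ → HasMidpointBalls A ε δ → δ ≤ b) : modConv A ε ≤ b :=
  Real.sSup_le (fun δ hδ => h δ hδ.1 hδ.2) hb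

lemma IsGrid.exists_close_decomp {C : Finset (EuclideanSpace ℝ (Fin n))} {Δ : ℝ}
    (hC : IsGrid C Δ) (hΔ : Δ ∈ Ioo (0 : ℝ) (1 / 2)) {p : EuclideanSpace ℝ (Fin n)}
    (hp : ‖p‖ = 1) (hpC : p ∉ C) :
    ∃ (k : ℕ) (q : Fin k → EuclideanSpace ℝ (Fin n)) (α : Fin k → ℝ),
      (∀ i, q i ∈ C) ∧ (∀ i, 0 ≤ α i) ∧ p = ∑ i, α i • q i ∧ ∑ i, α i ≤ 8 / 7 ∧
      ∀ i, ‖q i - p‖ ≤ Δ := by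
  have hp0 : p ≠ 0 := by rintro rfl; simp at hp
  obtain ⟨k, q, α, hqC, hα, rfl, hqq⟩ := hC.2 p hp0 (by rwa [hp, inv_one, one_smul])
  have hq i : ‖q i‖ = 1 := hC.1 _ (hqC i)
  have hα' i : 0 ≤ α i := (hα i).le
  have hinner i j : 1 - Δ ^ 2 / 2 ≤ ⟪q i, q j⟫ := by
    have h := norm_sub_sq_eq_two_sub_two_inner (hq i) (hq j)
    nlinarith [norm_nonneg (q i - q j), hqq i j]
  have hσ₁ : 1 ≤ ∑ i, α i := hp ▸ norm_sum_smul_le_sum hα' hq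
  have hσsq := mul_sq_sum_le_norm_sum_smul_sq hα' hinner
  rw [hp] at hσsq
  have hΔ78 : 7 / 8 ≤ 1 - Δ ^ 2 / 2 := by nlinarith [hΔ.1, hΔ.2]
  -- with `σ = ∑ i, α i ≥ 1`: `σ ≤ σ ^ 2 ≤ 1 / (1 - Δ ^ 2 / 2) ≤ 8 / 7`
  refine ⟨k, q, α, hqC, hα', rfl, by nlinarith, fun i => ?_⟩
  have hqp := mul_sum_le_inner_sum_smul hα' hinner i
  have h := norm_sub_sq_eq_two_sub_two_inner (hq i) hp
  exact (pow_le_pow_iff_left₀ (norm_nonneg _) hΔ.1.le two_ne_zero).1 (by nlinarith)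

lemma norm_sub_le_of_isMaxOn_inner {A : Set (EuclideanSpace ℝ (Fin n))} (hA : IsCompact A)
    (hAc : Convex ℝ A) {p q x y : EuclideanSpace ℝ (Fin n)} (hp : ‖p‖ = 1) (hq : ‖q‖ = 1)
    (hy : y ∈ A) (hx : x ∈ A) (hymax : IsMaxOn (⟪p, ·⟫) A y) (hxmax : IsMaxOn (⟪q, ·⟫) A x)
    {ε : ℝ} (hε : 0 < ε) (hmod : ‖q - p‖ * ε < 4 * modConv A ε) : ‖y - x‖ ≤ ε := by
  by_contra! hlt
  have := modConv_le (by positivity) fun δ hδ hadm => (le_div_iff₀' four_pos).2 <|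
    four_mul_le_norm_sub_mul_of_isMaxOn_inner hA hAc hε hδ hadm hp hq hy hx hymax hxmax hlt.le
  linarith

lemma inner_sub_le_of_mem_polyApprox {A : Set (EuclideanSpace ℝ (Fin n))} (hA : IsCompact A)
    (hAc : Convex ℝ A) {C : Finset (EuclideanSpace ℝ (Fin n))} {p q x y : EuclideanSpace ℝ (Fin n)}
    (hx : x ∈ polyApprox C A) (hy : y ∈ A) (hymax : IsMaxOn (⟪p, ·⟫) A y) (hp : ‖p‖ = 1)
    (hqC : q ∈ C) (hq : ‖q‖ = 1) {ε : ℝ} (hε : 0 < ε) (hmod : ‖q - p‖ * ε < 4 * modConv A ε) :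
    ⟪q, x - y⟫ ≤ ‖q - p‖ * ε := by
  obtain ⟨xq, hxq, hxqmax⟩ := hA.exists_isMaxOn ⟨y, hy⟩
    (f := (⟪q, ·⟫)) (continuous_const.inner continuous_id).continuousOn
  have hyxq := norm_sub_le_of_isMaxOn_inner hA hAc hp hq hy hxq hymax hxqmax hε hmod
  have hxs : ⟪q, x⟫ ≤ ⟪q, xq⟫ := suppF_eq_of_isMaxOn hxq hxqmax ▸ hx q hqC
  have hcs : ⟪q - p, xq - y⟫ ≤ ‖q - p‖ * ε :=
    (real_inner_le_norm _ _).trans (by rw [norm_sub_rev xq]; gcongr)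
  have hpy : ⟪p, xq⟫ ≤ ⟪p, y⟫ := hymax hxq
  simp only [inner_sub_left, inner_sub_right] at hcs ⊢
  linarith

lemma exists_dist_le_of_mem_polyApprox {A : Set (EuclideanSpace ℝ (Fin n))} (hA : IsCompact A)
    (hAc : Convex ℝ A) (hne : A.Nonempty) {C : Finset (EuclideanSpace ℝ (Fin n))} {Δ ε : ℝ}
    (hΔ : Δ ∈ Ioo (0 : ℝ) (1 / 2)) (hC : IsGrid C Δ) (hε : 0 < ε)
    (heq : modConv A ε / ε = Δ / (4 - Δ ^ 2)) {x : EuclideanSpace ℝ (Fin n)}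
    (hx : x ∈ polyApprox C A) : ∃ y ∈ A, dist x y ≤ 8 / 7 * Δ * ε := by
  obtain ⟨y, hy, hymax⟩ := exists_isMaxOn_inner_sub hA.isComplete hAc hne x
  refine ⟨y, hy, ?_⟩
  rcases eq_or_ne x y with rfl | hxy
  · simp only [dist_self]; have := hΔ.1; positivity
  have hxy' : 0 < ‖x - y‖ := norm_pos_iff.2 (sub_ne_zero.2 hxy)
  set p := ‖x - y‖⁻¹ • (x - y)
  have hp : ‖p‖ = 1 := by rw [norm_smul, norm_inv, norm_norm, inv_mul_cancel₀ hxy'.ne']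
  have hpmax : IsMaxOn (⟪p, ·⟫) A y := fun w hw => show ⟪p, w⟫ ≤ ⟪p, y⟫ by
    simp only [p, real_inner_smul_left]
    exact mul_le_mul_of_nonneg_left (hymax hw) (by positivity)
  have hpxy : ⟪p, x - y⟫ = ‖x - y‖ := by
    rw [real_inner_smul_left, real_inner_self_eq_norm_sq]
    field_simp
  have hpC : p ∉ C := fun hpC => by
    have := suppF_eq_of_isMaxOn hy hpmax ▸ hx p hpC
    rw [inner_sub_right] at hpxy
    linarith
  obtain ⟨k, q, α, hqC, hα, hpq, hσ, hqp⟩ := hC.exists_close_decomp hΔ hp hpC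
  have hmod : Δ * ε < 4 * modConv A ε := by
    have h4 : 0 < 4 - Δ ^ 2 := by nlinarith [hΔ.1, hΔ.2]
    have hm : 0 < modConv A ε := (div_pos_iff_of_pos_right hε).1 (heq ▸ div_pos hΔ.1 h4)
    rw [div_eq_div_iff hε.ne' h4.ne'] at heq
    nlinarith [mul_pos hm (pow_pos hΔ.1 2)]
  have hterm i : ⟪q i, x - y⟫ ≤ Δ * ε := by
    have hle : ‖q i - p‖ * ε ≤ Δ * ε := by gcongr; exact hqp i
    exact (inner_sub_le_of_mem_polyApprox hA hAc hx hy hpmax hp (hqC i) (hC.1 _ (hqC i)) hε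
      (hle.trans_lt hmod)).trans hle
  calc dist x y = ∑ i, α i * ⟪q i, x - y⟫ := by
        rw [dist_eq_norm, ← hpxy, hpq, sum_inner]
        simp only [real_inner_smul_left]
    _ ≤ ∑ i, α i * (Δ * ε) := Finset.sum_le_sum fun i _ => by gcongr; exacts [hα i, hterm i]
    _ ≤ 8 / 7 * Δ * ε := by
        rw [← Finset.sum_mul, mul_assoc]
        gcongr
        exact mul_nonneg hΔ.1.le hε.le

lemma isBounded_polyApprox {A : Set (EuclideanSpace ℝ (Fin n))} (hA : IsCompact A)
    (hAc : Convex ℝ A) (hne : A.Nonempty) {C : Finset (EuclideanSpace ℝ (Fin n))} {Δ ε : ℝ}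
    (hΔ : Δ ∈ Ioo (0 : ℝ) (1 / 2)) (hC : IsGrid C Δ) (hε : 0 < ε)
    (heq : modConv A ε / ε = Δ / (4 - Δ ^ 2)) : Bornology.IsBounded (polyApprox C A) :=
  hA.isBounded.cthickening.subset fun x hx =>
    let ⟨y, hy, hxy⟩ := exists_dist_le_of_mem_polyApprox hA hAc hne hΔ hC hε heq hx
    mem_cthickening_of_dist_le x y _ A hy hxy

end Euclidean

theorem hausdorffDist_inter_polyApprox_general
    (n : ℕ) (A B : Set (EuclideanSpace ℝ (Fin n)))
    (hA : IsCompact A) (hAc : Convex ℝ A)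
    (hB : IsCompact B) (hBc : Convex ℝ B)
    (r₀ d : ℝ) (hr₀ : 0 < r₀) (a : EuclideanSpace ℝ (Fin n))
    (hball : Metric.closedBall a r₀ ⊆ A ∩ B)
    (Δ εA εB : ℝ) (hΔ : Δ ∈ Set.Ioo (0 : ℝ) (1/2))
    (C : Finset (EuclideanSpace ℝ (Fin n))) (hC : IsGrid C Δ)
    (hdA : Metric.diam (polyApprox C A) ≤ d)
    (hεA : εA ∈ Set.Ioo 0 (Metric.diam A))
    (heqA : modConv A εA / εA = Δ / (4 - Δ^2))
    (hεB : εB ∈ Set.Ioo 0 (Metric.diam B))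
    (heqB : modConv B εB / εB = Δ / (4 - Δ^2)) :
    Metric.hausdorffDist (A ∩ B) (polyApprox C A ∩ polyApprox C B) ≤
      8/7 * (max εA εB + d / r₀ * (εA + εB)) * Δ := by
  obtain ⟨haA, haB⟩ := hball (mem_closedBall_self hr₀.le)
  obtain ⟨hεA₀, -⟩ := hεA
  obtain ⟨hεB₀, -⟩ := hεB
  have hΔ₀ : 0 < Δ := hΔ.1
  set ρ := 8 / 7 * Δ * (εA + εB)
  have hρ : 0 < ρ := by positivity
  have hbound : ρ / r₀ * d ≤ 8/7 * (max εA εB + d / r₀ * (εA + εB)) * Δ := by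
    have : 0 ≤ max εA εB * Δ := mul_nonneg (hεA₀.le.trans (le_max_left _ _)) hΔ₀.le
    simp only [ρ]
    field_simp
    nlinarith
  have hrhs := (by have := diam_nonneg.trans hdA; positivity : 0 ≤ ρ / r₀ * d).trans hbound
  refine hausdorffDist_le_of_mem_dist hrhs (fun x hx => ⟨x, ⟨subset_polyApprox hA C hx.1,
    subset_polyApprox hB C hx.2⟩, (dist_self x).trans_le hrhs⟩) ?_
  rintro y ⟨hyA, hyB⟩
  obtain ⟨u, hu, hyu⟩ := exists_dist_le_of_mem_polyApprox hA hAc ⟨a, haA⟩ hΔ hC hεA₀ heqA hyA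
  obtain ⟨v, hv, hyv⟩ := exists_dist_le_of_mem_polyApprox hB hBc ⟨a, haB⟩ hΔ hC hεB₀ heqB hyB
  have hya : dist y a ≤ d := (dist_le_diam_of_mem (isBounded_polyApprox hA hAc ⟨a, haA⟩ hΔ hC
    hεA₀ heqA) hyA (subset_polyApprox hA C haA)).trans hdA
  obtain ⟨z, hz, hyz⟩ := hAc.exists_mem_inter_dist_le hBc hr₀ hball hu hv hρ
    (hyu.trans (by simp only [ρ]; gcongr; linarith))
    (hyv.trans (by simp only [ρ]; gcongr; linarith))
  exact ⟨z, hz, hyz.trans ((by gcongr : ρ / r₀ * dist y a ≤ ρ / r₀ * d).trans hbound)⟩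

/-- Theorem 3.2: approximation of the intersection of two uniformly
convex compacta by intersections of their polyhedral approximations. -/
theorem hausdorffDist_inter_polyApprox
    (n : ℕ) (A B : Set (EuclideanSpace ℝ (Fin n)))
    (hA : IsCompact A) (hAc : Convex ℝ A) (hucA : UnifConvex A)
    (hB : IsCompact B) (hBc : Convex ℝ B) (hucB : UnifConvex B)
    (r₀ d : ℝ) (hr₀ : 0 < r₀) (a : EuclideanSpace ℝ (Fin n))
    (hball : Metric.closedBall a r₀ ⊆ A ∩ B)
    (Δ εA εB : ℝ) (hΔ : Δ ∈ Set.Ioo (0 : ℝ) (1/2))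
    (C : Finset (EuclideanSpace ℝ (Fin n))) (hC : IsGrid C Δ)
    (hdA : Metric.diam (polyApprox C A) ≤ d) (hdB : Metric.diam (polyApprox C B) ≤ d)
    (hεA : εA ∈ Set.Ioo 0 (Metric.diam A))
    (heqA : modConv A εA / εA = Δ / (4 - Δ^2))
    (hεB : εB ∈ Set.Ioo 0 (Metric.diam B))
    (heqB : modConv B εB / εB = Δ / (4 - Δ^2)) :
    Metric.hausdorffDist (A ∩ B) (polyApprox C A ∩ polyApprox C B) ≤
      8/7 * (max εA εB + d / r₀ * (εA + εB)) * Δ :=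
  hausdorffDist_inter_polyApprox_general n A B hA hAc hB hBc r₀ d hr₀ a hball Δ εA εB hΔ C hC hdA
    hεA heqA hεB heqB
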